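/- For every (y₁,y₂) ∈ ℝ², the cross product (determinant) of ∇Ẽ_X(y) and ∇G(y), where Ẽ_X(y) = (2X₁²+3X₂²)y₁⁶ + (9X₁²+6X₂²)y₁⁴y₂² + 10X₁X₂y₁³y₂³ + (6X₁²+9X₂²)y₁²y₂⁴ + (3X₁²+2X₂²)y₂⁶ and G(y) = y₁⁴+3y₁²y₂²+y₂⁴, equals a nonzero constant multiple of y₁y₂(y₁²−y₂²)(y₁²+y₂²)(X₁y₂−X₂y₁)². -/

import Mathlib

def Etilde (X₁ X₂ y₁ y₂ : ℝ) : ℝ :=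
  (2*X₁^2 + 3*X₂^2)*y₁^6 + (9*X₁^2 + 6*X₂^2)*y₁^4*y₂^2 + 10*X₁*X₂*y₁^3*y₂^3
    + (6*X₁^2 + 9*X₂^2)*y₁^2*y₂^4 + (3*X₁^2 + 2*X₂^2)*y₂^6

noncomputable def gradEtilde (X₁ X₂ y₁ y₂ : ℝ) : ℝ × ℝ :=
  (deriv (fun t => Etilde X₁ X₂ t y₂) y₁, deriv (fun t => Etilde X₁ X₂ y₁ t) y₂)

def gradG (y₁ y₂ : ℝ) : ℝ × ℝ := (4*y₁^3 + 6*y₁*y₂^2, 6*y₁^2*y₂ + 4*y₂^3)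

section Etilde

variable (X₁ X₂ y₁ y₂ : ℝ)

lemma hasDerivAt_Etilde_fst :
    HasDerivAt (fun t => Etilde X₁ X₂ t y₂)
      (6*(2*X₁^2 + 3*X₂^2)*y₁^5 + 4*(9*X₁^2 + 6*X₂^2)*y₁^3*y₂^2
        + 30*X₁*X₂*y₁^2*y₂^3 + 2*(6*X₁^2 + 9*X₂^2)*y₁*y₂^4) y₁ := by
  have h6 := (hasDerivAt_pow 6 y₁).const_mul (2*X₁^2 + 3*X₂^2)
  have h4 := ((hasDerivAt_pow 4 y₁).const_mul (9*X₁^2 + 6*X₂^2)).mul_const (y₂^2)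
  have h3 := ((hasDerivAt_pow 3 y₁).const_mul (10*X₁*X₂)).mul_const (y₂^3)
  have h2 := ((hasDerivAt_pow 2 y₁).const_mul (6*X₁^2 + 9*X₂^2)).mul_const (y₂^4)
  have h0 := hasDerivAt_const y₁ ((3*X₁^2 + 2*X₂^2)*y₂^6)
  refine ((((h6.add h4).add h3).add h2).add h0).congr_deriv ?_
  push_cast
  ring

lemma hasDerivAt_Etilde_snd :
    HasDerivAt (fun t => Etilde X₁ X₂ y₁ t)
      (2*(9*X₁^2 + 6*X₂^2)*y₁^4*y₂ + 30*X₁*X₂*y₁^3*y₂^2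
        + 4*(6*X₁^2 + 9*X₂^2)*y₁^2*y₂^3 + 6*(3*X₁^2 + 2*X₂^2)*y₂^5) y₂ := by
  have h0 := hasDerivAt_const y₂ ((2*X₁^2 + 3*X₂^2)*y₁^6)
  have h2 := (hasDerivAt_pow 2 y₂).const_mul ((9*X₁^2 + 6*X₂^2)*y₁^4)
  have h3 := (hasDerivAt_pow 3 y₂).const_mul (10*X₁*X₂*y₁^3)
  have h4 := (hasDerivAt_pow 4 y₂).const_mul ((6*X₁^2 + 9*X₂^2)*y₁^2)
  have h6 := (hasDerivAt_pow 6 y₂).const_mul (3*X₁^2 + 2*X₂^2)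
  refine ((((h0.add h2).add h3).add h4).add h6).congr_deriv ?_
  push_cast
  ring

lemma gradEtilde_eq :
    gradEtilde X₁ X₂ y₁ y₂ =
      (6*(2*X₁^2 + 3*X₂^2)*y₁^5 + 4*(9*X₁^2 + 6*X₂^2)*y₁^3*y₂^2
          + 30*X₁*X₂*y₁^2*y₂^3 + 2*(6*X₁^2 + 9*X₂^2)*y₁*y₂^4,
        2*(9*X₁^2 + 6*X₂^2)*y₁^4*y₂ + 30*X₁*X₂*y₁^3*y₂^2
          + 4*(6*X₁^2 + 9*X₂^2)*y₁^2*y₂^3 + 6*(3*X₁^2 + 2*X₂^2)*y₂^5) :=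
  Prod.ext (hasDerivAt_Etilde_fst X₁ X₂ y₁ y₂).deriv (hasDerivAt_Etilde_snd X₁ X₂ y₁ y₂).deriv

end Etilde

theorem cross_product_formula (X₁ X₂ : ℝ) :
    ∃ c : ℝ, c ≠ 0 ∧ ∀ y₁ y₂ : ℝ,
      (gradEtilde X₁ X₂ y₁ y₂).1 * (gradG y₁ y₂).2
        - (gradEtilde X₁ X₂ y₁ y₂).2 * (gradG y₁ y₂).1
      = c * (y₁ * y₂ * (y₁^2 - y₂^2) * (y₁^2 + y₂^2) * (X₁*y₂ - X₂*y₁)^2) := by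
  refine ⟨60, by norm_num, fun y₁ y₂ => ?_⟩
  rw [gradEtilde_eq, gradG]
  ring
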